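/- arXiv:1101.2947 — 3 statements merged into one kernel-verified Lean document; each statement's English description precedes it below -/
import Mathlib

section
/- Let d be a positive integer and let u, v > 0 satisfy 1/u + 1/v = 1. For complex vectors a, b ∈ ℂ^d write ⟨a, b⟩ = ∑_{i=1}^d a_i b_i (the bilinear pairing, extended ℂ-bilinearly from the Euclidean inner product on ℝ^d). Then for all ξ, η ∈ ℂ^d and every x ∈ ℝ^d, ∫_{ℝ^d} exp( (√u/√v)⟨ξ, x − y⟩ − (u/2)⟨ξ, ξ⟩ − ⟨x − y, x − y⟩/(2v) ) · exp( (√v/√u)⟨η, y⟩ − (v/2)⟨η, η⟩ − ⟨y, y⟩/(2u) ) d_N y = exp( ⟨ξ + η, x/√(uv)⟩ − (1/2)⟨ξ + η, ξ + η⟩ − ⟨x, x⟩/(2uv) ), where the integral is with respect to the normalized Lebesgue measure d_N y on ℝ^d. -/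
open MeasureTheory Real

/-- The normalized Lebesgue measure `d_N x = (2π)^(−d/2) dx` on `ℝ^d`. -/
noncomputable def normalizedLebesgue (d : ℕ) : Measure (EuclideanSpace ℝ (Fin d)) :=
  ENNReal.ofReal ((2 * Real.pi) ^ (-(d : ℝ) / 2)) •
    (volume : Measure (EuclideanSpace ℝ (Fin d)))

/-- The complex bilinear pairing `⟨a, b⟩ = ∑ i, a i * b i` on `ℂ^d`. -/
noncomputable def cpair {d : ℕ} (a b : Fin d → ℂ) : ℂ := ∑ i, a i * b i

/-- The canonical embedding of `ℝ^d` into `ℂ^d`. -/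
noncomputable def cvec {d : ℕ} (x : EuclideanSpace ℝ (Fin d)) : Fin d → ℂ :=
  fun i => (x i : ℂ)

/-!
The integrand is a product over coordinates, so the integral reduces to the one-dimensional
case. There `1 / u + 1 / v = 1` makes the two Gaussian factors combine into
`exp (-y ^ 2 / 2 + c * y + e)`, whose normalized integral is `exp (e + c ^ 2 / 2)`; completing the
square identifies this exponent with the right-hand side.
-/

open scoped Complex

lemma integral_euclideanSpace_prod {ι 𝕜 : Type*} [Fintype ι] [RCLike 𝕜] (f : ι → ℝ → 𝕜) :
    ∫ y : EuclideanSpace ℝ ι, ∏ i, f i (y i) = ∏ i, ∫ t, f i t := by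
  rw [← (PiLp.volume_preserving_toLp ι).integral_comp
    (MeasurableEquiv.toLp 2 _).measurableEmbedding]
  exact integral_fintype_prod_volume_eq_prod f

lemma integral_normalizedLebesgue_prod (d : ℕ) (f : Fin d → ℝ → ℂ) :
    ∫ y, ∏ i, f i (y i) ∂normalizedLebesgue d = ∏ i, (√(2 * π) : ℂ)⁻¹ * ∫ t, f i t := by
  have hnorm : (2 * π) ^ (-(d : ℝ) / 2) = (√(2 * π))⁻¹ ^ d := by
    rw [sqrt_eq_rpow, ← rpow_neg (by positivity), ← rpow_mul_natCast (by positivity)]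
    ring_nf
  rw [normalizedLebesgue, integral_smul_measure, ENNReal.toReal_ofReal (by positivity),
    integral_euclideanSpace_prod, Finset.prod_mul_distrib, Finset.prod_const, Finset.card_univ,
    Fintype.card_fin, hnorm, Complex.real_smul]
  push_cast
  rfl

lemma integral_cexp_neg_half_sq_add (c e : ℂ) :
    ∫ y : ℝ, cexp (-(1 / 2) * y ^ 2 + c * y + e) = √(2 * π) * cexp (e + c ^ 2 / 2) := by
  rw [integral_cexp_quadratic (by norm_num) c e]
  congr 1
  · rw [sqrt_eq_rpow, Complex.ofReal_cpow (by positivity)]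
    push_cast
    ring_nf
  · ring_nf

lemma convolution_exponent_eq_quadratic {s t : ℂ} (hs : s ≠ 0) (ht : t ≠ 0)
    (hst : s ^ 2 + t ^ 2 = s ^ 2 * t ^ 2) (ξ η X Y : ℂ) :
    (s / t) * (ξ * (X - Y)) - (s ^ 2 / 2) * (ξ * ξ) - (X - Y) * (X - Y) / (2 * t ^ 2)
      + ((t / s) * (η * Y) - (t ^ 2 / 2) * (η * η) - Y * Y / (2 * s ^ 2))
    = -(1 / 2) * Y ^ 2 + (X / t ^ 2 - (s / t) * ξ + (t / s) * η) * Y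
      + ((s / t) * ξ * X - (s ^ 2 / 2) * (ξ * ξ) - X ^ 2 / (2 * t ^ 2)
        - (t ^ 2 / 2) * (η * η)) := by
  field_simp
  linear_combination (-Y ^ 2) * hst

lemma convolution_exponent_complete_square {s t : ℂ} (hs : s ≠ 0) (ht : t ≠ 0)
    (hst : s ^ 2 + t ^ 2 = s ^ 2 * t ^ 2) (ξ η X : ℂ) :
    ((s / t) * ξ * X - (s ^ 2 / 2) * (ξ * ξ) - X ^ 2 / (2 * t ^ 2) - (t ^ 2 / 2) * (η * η))
      + (X / t ^ 2 - (s / t) * ξ + (t / s) * η) ^ 2 / 2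
    = (1 / (s * t)) * ((ξ + η) * X) - (1 / 2) * ((ξ + η) * (ξ + η))
      - X * X / (2 * s ^ 2 * t ^ 2) := by
  field_simp
  linear_combination ((X - s * t * ξ) ^ 2 + t ^ 4 * η ^ 2) * hst

theorem gaussian_exponential_convolution_one (u v : ℝ) (hu : 0 < u) (hv : 0 < v)
    (huv : 1 / u + 1 / v = 1) (ξ η : ℂ) (x : ℝ) :
    (√(2 * π) : ℂ)⁻¹ * ∫ y : ℝ,
        cexp ((√u / √v : ℂ) * (ξ * ((x : ℂ) - y)) - (u / 2 : ℂ) * (ξ * ξ)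
          - ((x : ℂ) - y) * ((x : ℂ) - y) / (2 * v : ℂ))
        * cexp ((√v / √u : ℂ) * (η * y) - (v / 2 : ℂ) * (η * η) - (y : ℂ) * y / (2 * u : ℂ))
      = cexp ((1 / √(u * v) : ℂ) * ((ξ + η) * x) - (1 / 2 : ℂ) * ((ξ + η) * (ξ + η))
          - (x : ℂ) * x / (2 * u * v : ℂ)) := by
  set s : ℂ := ((√u : ℝ) : ℂ)
  set t : ℂ := ((√v : ℝ) : ℂ)
  have hs : s ≠ 0 := Complex.ofReal_ne_zero.2 (sqrt_pos.2 hu).ne'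
  have ht : t ≠ 0 := Complex.ofReal_ne_zero.2 (sqrt_pos.2 hv).ne'
  have hsu : (u : ℂ) = s ^ 2 := by simp [s, ← Complex.ofReal_pow, sq_sqrt hu.le]
  have htv : (v : ℂ) = t ^ 2 := by simp [t, ← Complex.ofReal_pow, sq_sqrt hv.le]
  have hst : s ^ 2 + t ^ 2 = s ^ 2 * t ^ 2 := by
    rw [← hsu, ← htv]
    exact_mod_cast (by field_simp at huv; linarith : u + v = u * v)
  have hsqrt : (√(u * v) : ℂ) = s * t := by simp [s, t, sqrt_mul hu.le]
  simp only [← Complex.exp_add, hsu, htv, hsqrt, convolution_exponent_eq_quadratic hs ht hst,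
    integral_cexp_neg_half_sq_add, convolution_exponent_complete_square hs ht hst]
  rw [inv_mul_cancel_left₀ (Complex.ofReal_ne_zero.2 (by positivity))]

lemma cexp_cpair_combination_eq_prod {d : ℕ} (a b c : ℂ) (p q r r' w z : Fin d → ℂ) :
    cexp (a * cpair p q - b * cpair r r' - cpair w z / c)
      = ∏ i, cexp (a * (p i * q i) - b * (r i * r' i) - w i * z i / c) := by
  simp only [cpair, Finset.mul_sum, Finset.sum_div, ← Finset.sum_sub_distrib, Complex.exp_sum]

theorem gaussian_exponential_convolution_general
    (d : ℕ) (u v : ℝ) (hu : 0 < u) (hv : 0 < v)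
    (huv : 1 / u + 1 / v = 1) (ξ η : Fin d → ℂ) (x : EuclideanSpace ℝ (Fin d)) :
    (∫ y, Complex.exp ((Real.sqrt u / Real.sqrt v : ℂ) * cpair ξ (cvec (x - y))
          - (u / 2 : ℂ) * cpair ξ ξ
          - cpair (cvec (x - y)) (cvec (x - y)) / (2 * v : ℂ))
        * Complex.exp ((Real.sqrt v / Real.sqrt u : ℂ) * cpair η (cvec y)
          - (v / 2 : ℂ) * cpair η η
          - cpair (cvec y) (cvec y) / (2 * u : ℂ))
        ∂(normalizedLebesgue d))
    = Complex.exp ((1 / Real.sqrt (u * v) : ℂ) * cpair (ξ + η) (cvec x)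
        - (1 / 2 : ℂ) * cpair (ξ + η) (ξ + η)
        - cpair (cvec x) (cvec x) / (2 * u * v : ℂ)) := by
  simp only [cexp_cpair_combination_eq_prod, ← Finset.prod_mul_distrib, cvec, PiLp.sub_apply,
    Complex.ofReal_sub]
  rw [integral_normalizedLebesgue_prod d fun i (t : ℝ) =>
    cexp ((√u / √v : ℂ) * (ξ i * ((x i : ℂ) - t)) - (u / 2 : ℂ) * (ξ i * ξ i)
        - ((x i : ℂ) - t) * ((x i : ℂ) - t) / (2 * v : ℂ))
      * cexp ((√v / √u : ℂ) * (η i * t) - (v / 2 : ℂ) * (η i * η i) - (t : ℂ) * t / (2 * u : ℂ))]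
  simp only [gaussian_exponential_convolution_one u v hu hv huv, Pi.add_apply]

theorem gaussian_exponential_convolution
    (d : ℕ) (hd : 0 < d) (u v : ℝ) (hu : 0 < u) (hv : 0 < v)
    (huv : 1 / u + 1 / v = 1) (ξ η : Fin d → ℂ) (x : EuclideanSpace ℝ (Fin d)) :
    (∫ y, Complex.exp ((Real.sqrt u / Real.sqrt v : ℂ) * cpair ξ (cvec (x - y))
          - (u / 2 : ℂ) * cpair ξ ξ
          - cpair (cvec (x - y)) (cvec (x - y)) / (2 * v : ℂ))
        * Complex.exp ((Real.sqrt v / Real.sqrt u : ℂ) * cpair η (cvec y)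
          - (v / 2 : ℂ) * cpair η η
          - cpair (cvec y) (cvec y) / (2 * u : ℂ))
        ∂(normalizedLebesgue d))
    = Complex.exp ((1 / Real.sqrt (u * v) : ℂ) * cpair (ξ + η) (cvec x)
        - (1 / 2 : ℂ) * cpair (ξ + η) (ξ + η)
        - cpair (cvec x) (cvec x) / (2 * u * v : ℂ)) :=
  gaussian_exponential_convolution_general d u v hu hv huv ξ η x
end

section
/- Let d be a positive integer and let u, v > 1 satisfy 1/u + 1/v = 1. Let μ be the standard Gaussian measure on ℝ^d and let φ, ψ : ℝ^d → ℂ belong to L^∞(ℝ^d, μ). Define f_v(x) = φ(x/√v) e^{−⟨x,x⟩/(2v)} and g_u(x) = ψ(x/√u) e^{−⟨x,x⟩/(2u)}, and define W(y) = e^{⟨y,y⟩/2} · (f_v ⋆ g_u)(√(uv) · y), where ⋆ is convolution with respect to the normalized Lebesgue measure. Then W belongs to L^∞(ℝ^d, μ) and ‖W‖_{L^∞(μ)} ≤ ‖φ‖_{L^∞(μ)} · ‖ψ‖_{L^∞(μ)}. -/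
open MeasureTheory Real

/-- The standard Gaussian measure `dμ(x) = e^(−⟨x,x⟩/2) d_N x` on `ℝ^d`. -/
noncomputable def stdGaussian (d : ℕ) : Measure (EuclideanSpace ℝ (Fin d)) :=
  (normalizedLebesgue d).withDensity fun x => ENNReal.ofReal (Real.exp (-‖x‖ ^ 2 / 2))

/-!
Completing the square: when `1/u + 1/v = 1`,
`‖√(uv) y - z‖² / v + ‖z‖² / u = ‖y‖² + ‖z - √(u/v) y‖²`,
so the integrand defining `W y` is bounded by `‖φ‖_∞ ‖ψ‖_∞ e^{-‖y‖²/2}` times a Gaussian in `z`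
of total `d_N`-mass one, and the prefactor `e^{‖y‖²/2}` cancels `e^{-‖y‖²/2}`. Since the
Gaussian and Lebesgue measures have the same null sets, the `L^∞(μ)` bounds on `φ` and `ψ` hold
Lebesgue-almost everywhere.
-/

section CompleteSquare

variable {E : Type*} [NormedAddCommGroup E] [InnerProductSpace ℝ E]

lemma gaussian_exponent_complete_square {u v s : ℝ} (hu : u ≠ 0) (hv : v ≠ 0)
    (huv : 1 / u + 1 / v = 1) (hs : s ^ 2 = u * v) (y z : E) :
    -‖s • y - z‖ ^ 2 / (2 * v) + -‖z‖ ^ 2 / (2 * u)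
      = -‖y‖ ^ 2 / 2 + -‖z - (s / v) • y‖ ^ 2 / 2 := by
  have huv' : u + v = u * v := by field_simp at huv; linarith
  rw [norm_sub_sq_real, norm_sub_sq_real, norm_smul, norm_smul, real_inner_smul_left,
    real_inner_smul_right, real_inner_comm, mul_pow, mul_pow, Real.norm_eq_abs,
    Real.norm_eq_abs, sq_abs, sq_abs, div_pow, hs]
  field_simp
  linear_combination (u * ‖y‖ ^ 2 - ‖z‖ ^ 2) * huv'

end CompleteSquare

section GaussianDilation

variable {V : Type*} [NormedAddCommGroup V] [InnerProductSpace ℝ V]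

noncomputable def gaussianDilation (c : ℝ) (φ : V → ℂ) (x : V) : ℂ :=
  φ ((√c)⁻¹ • x) * Complex.exp ((-‖x‖ ^ 2 / (2 * c) : ℝ) : ℂ)

lemma norm_gaussianDilation (c : ℝ) (φ : V → ℂ) (x : V) :
    ‖gaussianDilation c φ x‖ = ‖φ ((√c)⁻¹ • x)‖ * rexp (-‖x‖ ^ 2 / (2 * c)) := by
  rw [gaussianDilation, norm_mul, Complex.norm_exp, Complex.ofReal_re]

variable [FiniteDimensional ℝ V] [MeasurableSpace V] [BorelSpace V]

lemma integrable_exp_neg_sq_norm_div {c : ℝ} (hc : 0 < c) :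
    Integrable fun x : V => rexp (-‖x‖ ^ 2 / (2 * c)) := by
  have := GaussianFourier.integrable_cexp_neg_mul_sq_norm_add (V := V)
    (b := 1 / (2 * c)) (by norm_num; positivity) 0 0
  refine this.norm.congr (.of_forall fun x => ?_)
  simp only [zero_mul, add_zero, Complex.norm_exp]
  norm_cast
  ring_nf

variable {c C : ℝ} {φ : V → ℂ}

lemma integrable_gaussianDilation (hc : 0 < c) (hφ : AEStronglyMeasurable φ)
    (hφC : ∀ᵐ x, ‖φ x‖ ≤ C) : Integrable (gaussianDilation c φ) := by
  have hscale := Measure.quasiMeasurePreserving_smul (volume : Measure V)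
    (inv_ne_zero (Real.sqrt_pos.2 hc).ne')
  refine ((integrable_exp_neg_sq_norm_div hc).const_mul C).mono'
    ((hφ.comp_quasiMeasurePreserving hscale).mul (by fun_prop)) ?_
  filter_upwards [hscale.ae hφC] with x hx
  rw [norm_gaussianDilation]
  gcongr

end GaussianDilation

section GaussianMeasures

variable {d : ℕ}

instance isAddHaarMeasure_normalizedLebesgue : (normalizedLebesgue d).IsAddHaarMeasure :=
  .smul _ (by positivity) ENNReal.ofReal_ne_top

lemma normalizedLebesgue_ac_volume : normalizedLebesgue d ≪ volume :=
  Measure.smul_absolutelyContinuous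

lemma volume_ac_normalizedLebesgue : volume ≪ normalizedLebesgue d :=
  Measure.absolutelyContinuous_smul (by positivity)

lemma volume_ac_stdGaussian : volume ≪ stdGaussian d :=
  volume_ac_normalizedLebesgue.trans <| withDensity_absolutelyContinuous'
    (by fun_prop) (.of_forall fun _ => by positivity)

lemma integral_exp_neg_sq_norm_sub_normalizedLebesgue (b : EuclideanSpace ℝ (Fin d)) :
    ∫ z, rexp (-‖z - b‖ ^ 2 / 2) ∂normalizedLebesgue d = 1 := by
  have hvol : ∫ z : EuclideanSpace ℝ (Fin d), rexp (-‖z - b‖ ^ 2 / 2)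
      = (2 * π) ^ ((d : ℝ) / 2) := by
    rw [integral_sub_right_eq_self (fun z => rexp (-‖z‖ ^ 2 / 2)) b]
    convert GaussianFourier.integral_rexp_neg_mul_sq_norm (V := EuclideanSpace ℝ (Fin d))
      (b := 1 / 2) (by norm_num) using 1
    · congr 1 with z; congr 1; ring
    · rw [finrank_euclideanSpace_fin]; congr 1; field_simp
  rw [normalizedLebesgue, integral_smul_measure, ENNReal.toReal_ofReal (by positivity), hvol,
    smul_eq_mul, ← Real.rpow_add (by positivity), neg_div, neg_add_cancel, Real.rpow_zero]

end GaussianMeasures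

section Convolution

variable {G : Type*} [AddGroup G] [MeasurableSpace G] [MeasurableAdd₂ G] [MeasurableNeg G]
  {μ : Measure G} [SFinite μ] [μ.IsAddRightInvariant]

lemma aestronglyMeasurable_integral_sub_mul {f g : G → ℂ} (hf : Integrable f μ)
    (hg : Integrable g μ) : AEStronglyMeasurable (fun x => ∫ z, f (x - z) * g z ∂μ) μ :=
  (hg.integrable_convolution (ContinuousLinearMap.mul ℂ ℂ) hf).aestronglyMeasurable.congr
    (.of_forall fun x => by simp [convolution_def, mul_comm])

end Convolution

section WickProduct

variable {d : ℕ}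

/-- The Wick product `Γ(1/√u)φ ⋄ Γ(1/√v)ψ` when `1/u + 1/v = 1`. -/
noncomputable def gaussianWick (u v : ℝ) (φ ψ : EuclideanSpace ℝ (Fin d) → ℂ)
    (y : EuclideanSpace ℝ (Fin d)) : ℂ :=
  Complex.exp ((‖y‖ ^ 2 / 2 : ℝ) : ℂ) *
    ∫ z, gaussianDilation v φ (√(u * v) • y - z) * gaussianDilation u ψ z ∂normalizedLebesgue d

variable {u v A B : ℝ} {φ ψ : EuclideanSpace ℝ (Fin d) → ℂ}

lemma norm_integral_gaussianDilation_mul_le (hu : 0 < u) (hv : 0 < v)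
    (huv : 1 / u + 1 / v = 1) (hφA : ∀ᵐ x, ‖φ x‖ ≤ A) (hψB : ∀ᵐ x, ‖ψ x‖ ≤ B)
    (y : EuclideanSpace ℝ (Fin d)) :
    ‖∫ z, gaussianDilation v φ (√(u * v) • y - z) * gaussianDilation u ψ z ∂normalizedLebesgue d‖
      ≤ A * B * rexp (-‖y‖ ^ 2 / 2) := by
  set s := √(u * v)
  have hs : s ^ 2 = u * v := Real.sq_sqrt (by positivity)
  have hφA' : ∀ᵐ z ∂normalizedLebesgue d, ‖φ ((√v)⁻¹ • (s • y - z))‖ ≤ A :=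
    normalizedLebesgue_ac_volume.ae_le <|
      ((Measure.quasiMeasurePreserving_smul volume (by positivity)).comp
        (quasiMeasurePreserving_sub_left_of_right_invariant volume (s • y))).ae hφA
  have hψB' : ∀ᵐ z ∂normalizedLebesgue d, ‖ψ ((√u)⁻¹ • z)‖ ≤ B :=
    normalizedLebesgue_ac_volume.ae_le <|
      (Measure.quasiMeasurePreserving_smul volume (by positivity)).ae hψB
  have hgauss := integral_exp_neg_sq_norm_sub_normalizedLebesgue ((s / v) • y)
  calc _ ≤ ∫ z, A * B * rexp (-‖y‖ ^ 2 / 2) * rexp (-‖z - (s / v) • y‖ ^ 2 / 2)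
          ∂normalizedLebesgue d := by
        refine norm_integral_le_of_norm_le
          ((Integrable.of_integral_ne_zero (by simp [hgauss])).const_mul _) ?_
        filter_upwards [hφA', hψB'] with z hφz hψz
        rw [norm_mul, norm_gaussianDilation, norm_gaussianDilation]
        calc _ ≤ A * rexp (-‖s • y - z‖ ^ 2 / (2 * v)) * (B * rexp (-‖z‖ ^ 2 / (2 * u))) :=
              mul_le_mul (by gcongr) (by gcongr) (by positivity)
                (mul_nonneg ((norm_nonneg _).trans hφz) (exp_nonneg _))
          _ = A * B * rexp (-‖s • y - z‖ ^ 2 / (2 * v) + -‖z‖ ^ 2 / (2 * u)) := by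
              rw [exp_add]; ring
          _ = _ := by
              rw [gaussian_exponent_complete_square hu.ne' hv.ne' huv hs, exp_add]; ring
    _ = A * B * rexp (-‖y‖ ^ 2 / 2) := by rw [integral_const_mul, hgauss, mul_one]

lemma norm_gaussianWick_le (hu : 0 < u) (hv : 0 < v) (huv : 1 / u + 1 / v = 1)
    (hφA : ∀ᵐ x, ‖φ x‖ ≤ A) (hψB : ∀ᵐ x, ‖ψ x‖ ≤ B) (y : EuclideanSpace ℝ (Fin d)) :
    ‖gaussianWick u v φ ψ y‖ ≤ A * B := by
  rw [gaussianWick, norm_mul, Complex.norm_exp, Complex.ofReal_re]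
  calc _ ≤ rexp (‖y‖ ^ 2 / 2) * (A * B * rexp (-‖y‖ ^ 2 / 2)) := by
        gcongr; exact norm_integral_gaussianDilation_mul_le hu hv huv hφA hψB y
    _ = A * B := by rw [mul_left_comm, ← exp_add, neg_div, add_neg_cancel, exp_zero, mul_one]

lemma aestronglyMeasurable_gaussianWick (hu : 0 < u) (hv : 0 < v)
    (hφ : AEStronglyMeasurable φ) (hψ : AEStronglyMeasurable ψ)
    (hφA : ∀ᵐ x, ‖φ x‖ ≤ A) (hψB : ∀ᵐ x, ‖ψ x‖ ≤ B) :
    AEStronglyMeasurable (gaussianWick u v φ ψ) (stdGaussian d) := by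
  have hconv := aestronglyMeasurable_integral_sub_mul (μ := normalizedLebesgue d)
    ((integrable_gaussianDilation hv hφ hφA).smul_measure ENNReal.ofReal_ne_top)
    ((integrable_gaussianDilation hu hψ hψB).smul_measure ENNReal.ofReal_ne_top)
  exact ((by fun_prop : Continuous fun y : EuclideanSpace ℝ (Fin d) =>
      Complex.exp ((‖y‖ ^ 2 / 2 : ℝ) : ℂ)).aestronglyMeasurable.mul
    (hconv.comp_quasiMeasurePreserving (Measure.quasiMeasurePreserving_smul _ (by positivity)))
    ).mono_ac (withDensity_absolutelyContinuous _ _)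

end WickProduct

theorem wick_holder_infty_general
    (d : ℕ)
    (u v : ℝ) (hu : 1 < u) (hv : 1 < v) (huv : 1 / u + 1 / v = 1)
    (φ ψ : EuclideanSpace ℝ (Fin d) → ℂ)
    (hφ : MemLp φ ⊤ (stdGaussian d))
    (hψ : MemLp ψ ⊤ (stdGaussian d))
    (fv gu W : EuclideanSpace ℝ (Fin d) → ℂ)
    (hfv : ∀ x, fv x = φ ((Real.sqrt v)⁻¹ • x)
        * Complex.exp ((-‖x‖ ^ 2 / (2 * v) : ℝ) : ℂ))
    (hgu : ∀ x, gu x = ψ ((Real.sqrt u)⁻¹ • x)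
        * Complex.exp ((-‖x‖ ^ 2 / (2 * u) : ℝ) : ℂ))
    (hW : ∀ y, W y = Complex.exp ((‖y‖ ^ 2 / 2 : ℝ) : ℂ)
        * ∫ z, fv (Real.sqrt (u * v) • y - z) * gu z ∂(normalizedLebesgue d)) :
    MemLp W ⊤ (stdGaussian d) ∧
    eLpNorm W ⊤ (stdGaussian d)
      ≤ eLpNorm φ ⊤ (stdGaussian d) * eLpNorm ψ ⊤ (stdGaussian d) := by
  obtain rfl : fv = gaussianDilation v φ := funext hfv
  obtain rfl : gu = gaussianDilation u ψ := funext hgu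
  obtain rfl : W = gaussianWick u v φ ψ := funext hW
  have hu0 : 0 < u := one_pos.trans hu
  have hv0 : 0 < v := one_pos.trans hv
  have hφA := volume_ac_stdGaussian.ae_le (ae_le_lpNorm_exponent_top hφ)
  have hψB := volume_ac_stdGaussian.ae_le (ae_le_lpNorm_exponent_top hψ)
  have hbound := norm_gaussianWick_le hu0 hv0 huv hφA hψB
  refine ⟨memLp_top_of_bound (aestronglyMeasurable_gaussianWick hu0 hv0
    (hφ.1.mono_ac volume_ac_stdGaussian) (hψ.1.mono_ac volume_ac_stdGaussian) hφA hψB)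
    _ (.of_forall hbound), ?_⟩
  calc eLpNorm (gaussianWick u v φ ψ) ⊤ (stdGaussian d)
      ≤ ENNReal.ofReal (lpNorm φ ⊤ (stdGaussian d) * lpNorm ψ ⊤ (stdGaussian d)) := by
        rw [eLpNorm_exponent_top]; exact eLpNormEssSup_le_of_ae_bound (.of_forall hbound)
    _ = _ := by rw [ENNReal.ofReal_mul lpNorm_nonneg, ofReal_lpNorm hφ, ofReal_lpNorm hψ]

theorem wick_holder_infty
    (d : ℕ) (hd : 0 < d)
    (u v : ℝ) (hu : 1 < u) (hv : 1 < v) (huv : 1 / u + 1 / v = 1)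
    (φ ψ : EuclideanSpace ℝ (Fin d) → ℂ)
    (hφ : MemLp φ ⊤ (stdGaussian d))
    (hψ : MemLp ψ ⊤ (stdGaussian d))
    (fv gu W : EuclideanSpace ℝ (Fin d) → ℂ)
    (hfv : ∀ x, fv x = φ ((Real.sqrt v)⁻¹ • x)
        * Complex.exp ((-‖x‖ ^ 2 / (2 * v) : ℝ) : ℂ))
    (hgu : ∀ x, gu x = ψ ((Real.sqrt u)⁻¹ • x)
        * Complex.exp ((-‖x‖ ^ 2 / (2 * u) : ℝ) : ℂ))
    (hW : ∀ y, W y = Complex.exp ((‖y‖ ^ 2 / 2 : ℝ) : ℂ)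
        * ∫ z, fv (Real.sqrt (u * v) • y - z) * gu z ∂(normalizedLebesgue d)) :
    MemLp W ⊤ (stdGaussian d) ∧
    eLpNorm W ⊤ (stdGaussian d)
      ≤ eLpNorm φ ⊤ (stdGaussian d) * eLpNorm ψ ⊤ (stdGaussian d) :=
  wick_holder_infty_general d u v hu hv huv φ ψ hφ hψ fv gu W hfv hgu hW
end

section
/- Let u, v, p, q, r be real numbers, all greater than 1, such that 1/u + 1/v = 1 and 1/(u(p − 1)) + 1/(v(q − 1)) = 1/(r − 1); write p' = p/(p − 1), q' = q/(q − 1), r' = r/(r − 1), and set α = q'/(v √(p' q' r')), β = r'/√(p' q' r'), γ = p'/(u √(p' q' r')). Define for s, t > 0 the quantity Φ(s, t) = (p^{1/p} q^{1/q} / r^{1/r}) · s^{1/p} t^{1/q} / ( (s + t + β²)^{1/r'} · (γ² s + α² t + s t)^{1/r} ). Then sup_{s > 0, t > 0} Φ(s, t) = v^{1/r − 1/p} · u^{1/r − 1/q}, and moreover Φ(s, t) = v^{1/r − 1/p} · u^{1/r − 1/q} if and only if s = 1/(p v) and t = 1/(q u). -/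
/-!
Put `σ = p v s` and `τ = q u t`. Then `s + t + β²` and `u v r (γ² s + α² t + s t)` become
`σ / (p v) + τ / (q u) + β²` and `b₁ σ + b₂ τ + b₃ σ τ`, and both families of weights sum to one
precisely because `p' / u + q' / v = r'`. Weighted AM–GM (strict concavity of `log`) bounds the
two factors below by `σ ^ (1 / (p v)) τ ^ (1 / (q u))` and `σ ^ (b₁ + b₃) τ ^ (b₂ + b₃)`; raised to
the powers `1 / r'` and `1 / r` these exponents add up to exactly `1 / p` and `1 / q`, which cancel
the numerator `σ ^ (1 / p) τ ^ (1 / q)` of the rescaled `Φ`. Equality in the first AM–GM forces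
`σ = τ = 1`.
-/

open Real Finset

theorem weighted_sum_log_le_log_weighted_sum {a b c x y z : ℝ} (ha : 0 ≤ a) (hb : 0 ≤ b)
    (hc : 0 ≤ c) (habc : a + b + c = 1) (hx : 0 < x) (hy : 0 < y) (hz : 0 < z) :
    a * log x + b * log y + c * log z ≤ log (a * x + b * y + c * z) := by
  have := strictConcaveOn_log_Ioi.concaveOn.le_map_sum (t := univ) (w := ![a, b, c])
    (p := ![x, y, z]) (by simp [Fin.forall_fin_succ, ha, hb, hc])
    (by simp [Fin.sum_univ_three, habc]) (by simp [Fin.forall_fin_succ, hx, hy, hz])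
  simpa [Fin.sum_univ_three, add_assoc] using this

theorem weighted_sum_log_eq_log_weighted_sum_iff {a b c x y z : ℝ} (ha : 0 < a) (hb : 0 < b)
    (hc : 0 < c) (habc : a + b + c = 1) (hx : 0 < x) (hy : 0 < y) (hz : 0 < z) :
    a * log x + b * log y + c * log z = log (a * x + b * y + c * z) ↔ x = y ∧ y = z := by
  have := strictConcaveOn_log_Ioi.map_sum_eq_iff_of_pos (t := univ) (w := ![a, b, c])
    (p := ![x, y, z]) (by simp [Fin.forall_fin_succ, ha, hb, hc])
    (by simp [Fin.sum_univ_three, habc]) (by simp [Fin.forall_fin_succ, hx, hy, hz])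
  simp only [Nat.succ_eq_add_one, Nat.reduceAdd, smul_eq_mul, Fin.sum_univ_three, Fin.isValue,
    Matrix.cons_val_zero, Matrix.cons_val_one, Matrix.cons_val, mem_univ, forall_const,
    Fin.forall_fin_succ, Matrix.cons_val_succ, Matrix.cons_val_fin_one, true_and, and_true] at this
  rw [eq_comm, this]
  grind

theorem rpow_mul_rpow_le_rpow_mul_rpow_of_weights {a₁ a₂ a₃ b₁ b₂ b₃ θ η x y σ τ : ℝ}
    (ha₁ : 0 < a₁) (ha₂ : 0 < a₂) (ha₃ : 0 < a₃) (ha : a₁ + a₂ + a₃ = 1)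
    (hb₁ : 0 < b₁) (hb₂ : 0 < b₂) (hb₃ : 0 < b₃) (hb : b₁ + b₂ + b₃ = 1)
    (hθ : 0 < θ) (hη : 0 ≤ η)
    (hx : x = θ * a₁ + η * (b₁ + b₃)) (hy : y = θ * a₂ + η * (b₂ + b₃))
    (hσ : 0 < σ) (hτ : 0 < τ) :
    σ ^ x * τ ^ y ≤ (a₁ * σ + a₂ * τ + a₃) ^ θ * (b₁ * σ + b₂ * τ + b₃ * (σ * τ)) ^ η ∧
      (σ ^ x * τ ^ y = (a₁ * σ + a₂ * τ + a₃) ^ θ * (b₁ * σ + b₂ * τ + b₃ * (σ * τ)) ^ η ↔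
        σ = 1 ∧ τ = 1) := by
  have hA := weighted_sum_log_le_log_weighted_sum ha₁.le ha₂.le ha₃.le ha hσ hτ one_pos
  have hB := weighted_sum_log_le_log_weighted_sum hb₁.le hb₂.le hb₃.le hb hσ hτ (mul_pos hσ hτ)
  rw [log_one, mul_one, mul_zero, add_zero] at hA
  rw [log_mul hσ.ne' hτ.ne'] at hB
  set A := a₁ * σ + a₂ * τ + a₃
  set B := b₁ * σ + b₂ * τ + b₃ * (σ * τ)
  have hlog_gap : log (A ^ θ * B ^ η) - log (σ ^ x * τ ^ y) =
      θ * (log A - (a₁ * log σ + a₂ * log τ)) +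
        η * (log B - (b₁ * log σ + b₂ * log τ + b₃ * (log σ + log τ))) := by
    rw [log_mul (by positivity) (by positivity), log_mul (by positivity) (by positivity),
      log_rpow (by positivity), log_rpow (by positivity), log_rpow hσ, log_rpow hτ, hx, hy]
    ring
  have hgapA := sub_nonneg.2 hA
  have hgapB := sub_nonneg.2 hB
  refine ⟨?_, fun heq ↦ ?_, ?_⟩
  · rw [← log_le_log_iff (by positivity) (by positivity), ← sub_nonneg, hlog_gap]
    positivity
  · rw [heq, sub_self] at hlog_gap
    have hθgapA : θ * (log A - (a₁ * log σ + a₂ * log τ)) = 0 := by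
      linarith [mul_nonneg hθ.le hgapA, mul_nonneg hη hgapB]
    have hA_eq : a₁ * log σ + a₂ * log τ + a₃ * log 1 = log (a₁ * σ + a₂ * τ + a₃ * 1) := by
      rw [log_one, mul_one, mul_zero, add_zero]
      linarith [(mul_eq_zero.1 hθgapA).resolve_left hθ.ne']
    obtain ⟨hστ, hτ₁⟩ :=
      (weighted_sum_log_eq_log_weighted_sum_iff ha₁ ha₂ ha₃ ha hσ hτ one_pos).1 hA_eq
    exact ⟨hστ.trans hτ₁, hτ₁⟩
  · rintro ⟨rfl, rfl⟩
    simp [A, B, ha, hb]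

theorem rpow_mul_rpow_div_eq_rescaled {p q r u v s t A B a b c θ : ℝ} (hp : 0 < p) (hq : 0 < q)
    (hr : 0 < r) (hu : 0 < u) (hv : 0 < v) (hs : 0 < s) (ht : 0 < t) (hB : 0 < B) :
    p ^ a * q ^ b / r ^ c * (s ^ a * t ^ b / (A ^ θ * B ^ c)) =
      v ^ (c - a) * u ^ (c - b) *
        ((p * v * s) ^ a * (q * u * t) ^ b / (A ^ θ * (u * v * r * B) ^ c)) := by
  rw [rpow_sub hv, rpow_sub hu, mul_rpow (by positivity) hs.le, mul_rpow hp.le hv.le,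
    mul_rpow (by positivity) ht.le, mul_rpow hq.le hu.le, mul_rpow (by positivity) hB.le,
    mul_rpow (by positivity) hr.le, mul_rpow hu.le hv.le]
  field_simp

namespace WeightedYoung

noncomputable def phi (p q r r' α β γ s t : ℝ) : ℝ :=
  p ^ (1 / p) * q ^ (1 / q) / r ^ (1 / r) *
    (s ^ (1 / p) * t ^ (1 / q) /
      ((s + t + β ^ 2) ^ (1 / r') * (γ ^ 2 * s + α ^ 2 * t + s * t) ^ (1 / r)))

variable {u v p q r p' q' r' : ℝ}

theorem conj_div_add_conj_div_eq_conj (huv : u.HolderConjugate v) (hp : p.HolderConjugate p')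
    (hq : q.HolderConjugate q') (hr : r.HolderConjugate r')
    (h : 1 / (u * (p - 1)) + 1 / (v * (q - 1)) = 1 / (r - 1)) : p' / u + q' / v = r' := by
  have hp₁ := hp.sub_one_ne_zero
  have hq₁ := hq.sub_one_ne_zero
  have hu := huv.ne_zero
  have hv := huv.symm.ne_zero
  calc p' / u + q' / v = (1 / u + 1 / v) + (1 / (u * (p - 1)) + 1 / (v * (q - 1))) := by
        rw [hp.conjugate_eq, hq.conjugate_eq]; field_simp; ring
    _ = r' := by
        rw [huv.one_div_add_one_div, h, hr.conjugate_eq]; field_simp [hr.sub_one_ne_zero]; ring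

theorem div_mul_mul_eq_one_div_sub (hu : u ≠ 0) (hv : v ≠ 0) (hq' : q' ≠ 0) (hr' : r' ≠ 0)
    (h : p' / u + q' / v = r') : p' / (u * q' * r') = 1 / q' - 1 / (v * r') := by
  field_simp at h ⊢
  linear_combination h

variable (huv : u.HolderConjugate v) (hp : p.HolderConjugate p') (hq : q.HolderConjugate q')
  (hr : r.HolderConjugate r') (h : p' / u + q' / v = r')
include huv hp hq h

theorem sum_first_weights_eq_one : 1 / (p * v) + 1 / (q * u) + r' / (p' * q') = 1 := by
  have hu := huv.ne_zero
  have hv := huv.symm.ne_zero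
  have hp' := hp.symm.ne_zero
  have hq' := hq.symm.ne_zero
  calc 1 / (p * v) + 1 / (q * u) + r' / (p' * q')
      = (1 / p + 1 / p') * (1 / v) + (1 / q + 1 / q') * (1 / u) := by
        rw [← h]; field_simp; ring
    _ = 1 := by
        rw [hp.one_div_add_one_div, hq.one_div_add_one_div, one_div_one, one_mul, one_mul,
          add_comm, huv.one_div_add_one_div, one_div_one]

include hr

theorem one_div_eq_combined_exponent_left :
    1 / p = 1 / r' * (1 / (p * v)) + 1 / r * (r * p' / (p * u * q' * r') + r / (p * q)) := by
  have hr₀ := hr.ne_zero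
  have hp₀ := hp.ne_zero
  have hq₀ := hq.ne_zero
  symm
  calc 1 / r' * (1 / (p * v)) + 1 / r * (r * p' / (p * u * q' * r') + r / (p * q))
      = 1 / p * (p' / (u * q' * r') + 1 / (v * r') + 1 / q) := by field_simp; ring
    _ = 1 / p := by
        rw [div_mul_mul_eq_one_div_sub huv.ne_zero huv.symm.ne_zero hq.symm.ne_zero
          hr.symm.ne_zero h, sub_add_cancel, add_comm, hq.one_div_add_one_div, one_div_one,
          mul_one]

theorem one_div_eq_combined_exponent_right :
    1 / q = 1 / r' * (1 / (q * u)) + 1 / r * (r * q' / (q * v * p' * r') + r / (p * q)) := by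
  rw [mul_comm p q]
  exact one_div_eq_combined_exponent_left huv.symm hq hp hr (by rw [← h, add_comm])

theorem sum_second_weights_eq_one :
    r * p' / (p * u * q' * r') + r * q' / (q * v * p' * r') + r / (p * q) = 1 := by
  have hr' := hr.symm.ne_zero
  have hsum := sum_first_weights_eq_one huv hp hq h
  have hr1 : 1 / r + 1 / r' = 1 := by rw [hr.one_div_add_one_div, one_div_one]
  calc r * p' / (p * u * q' * r') + r * q' / (q * v * p' * r') + r / (p * q)
      = r * (1 / p * (p' / (u * q' * r')) + 1 / q * (q' / (v * p' * r')) + 1 / (p * q)) := by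
        ring
    _ = r * ((1 / p + 1 / p') * (1 / q + 1 / q') -
          1 / r' * (1 / (p * v) + 1 / (q * u) + r' / (p' * q'))) := by
        rw [div_mul_mul_eq_one_div_sub huv.ne_zero huv.symm.ne_zero hq.symm.ne_zero hr' h,
          div_mul_mul_eq_one_div_sub huv.symm.ne_zero huv.ne_zero hp.symm.ne_zero hr'
            (by rw [← h, add_comm])]
        field_simp
        ring
    _ = 1 := by
        rw [hp.one_div_add_one_div, hq.one_div_add_one_div, hsum, one_div_one, mul_one, mul_one,
          ← eq_sub_of_add_eq hr1, mul_one_div_cancel hr.ne_zero]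

theorem phi_le_and_eq_iff {α β γ s t : ℝ} (hα : α ^ 2 = q' / (v ^ 2 * (p' * r')))
    (hβ : β ^ 2 = r' / (p' * q')) (hγ : γ ^ 2 = p' / (u ^ 2 * (q' * r'))) (hs : 0 < s)
    (ht : 0 < t) :
    phi p q r r' α β γ s t ≤ v ^ (1 / r - 1 / p) * u ^ (1 / r - 1 / q) ∧
      (phi p q r r' α β γ s t = v ^ (1 / r - 1 / p) * u ^ (1 / r - 1 / q) ↔
        s = 1 / (p * v) ∧ t = 1 / (q * u)) := by
  obtain ⟨hu, hv, -⟩ := huv.all_pos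
  obtain ⟨hp₀, hp', -⟩ := hp.all_pos
  obtain ⟨hq₀, hq', -⟩ := hq.all_pos
  obtain ⟨hr₀, hr', -⟩ := hr.all_pos
  have hA : s + t + β ^ 2 =
      1 / (p * v) * (p * v * s) + 1 / (q * u) * (q * u * t) + r' / (p' * q') := by
    rw [hβ]; field_simp
  have hB : u * v * r * (γ ^ 2 * s + α ^ 2 * t + s * t) =
      r * p' / (p * u * q' * r') * (p * v * s) + r * q' / (q * v * p' * r') * (q * u * t) +
        r / (p * q) * ((p * v * s) * (q * u * t)) := by
    rw [hα, hγ]; field_simp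
  obtain ⟨hle, heq⟩ := rpow_mul_rpow_le_rpow_mul_rpow_of_weights (by positivity) (by positivity)
    (by positivity) (sum_first_weights_eq_one huv hp hq h) (by positivity) (by positivity)
    (by positivity) (sum_second_weights_eq_one huv hp hq hr h) (by positivity) (by positivity)
    (one_div_eq_combined_exponent_left huv hp hq hr h) (one_div_eq_combined_exponent_right huv hp hq hr h)
    (by positivity : 0 < p * v * s) (by positivity : 0 < q * u * t)
  have hM : 0 < v ^ (1 / r - 1 / p) * u ^ (1 / r - 1 / q) := by positivity
  rw [phi, rpow_mul_rpow_div_eq_rescaled hp₀ hq₀ hr₀ hu hv hs ht (by positivity), hA, hB,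
    mul_le_iff_le_one_right hM, div_le_one (by positivity), mul_eq_left₀ hM.ne',
    div_eq_one_iff_eq (by positivity), heq, eq_div_iff (by positivity), eq_div_iff (by positivity),
    mul_comm s, mul_comm t]
  exact ⟨hle, .rfl⟩

end WeightedYoung

theorem weighted_young_sup_constant_general
    (u v p q r : ℝ)
    (hu : 1 < u) (hp : 1 < p) (hq : 1 < q) (hr : 1 < r)
    (huv : 1 / u + 1 / v = 1)
    (hcond : 1 / (u * (p - 1)) + 1 / (v * (q - 1)) = 1 / (r - 1))
    (p' q' r' : ℝ) (hp' : p' = p / (p - 1)) (hq' : q' = q / (q - 1)) (hr' : r' = r / (r - 1))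
    (α β γ : ℝ)
    (hα : α = q' / (v * Real.sqrt (p' * q' * r')))
    (hβ : β = r' / Real.sqrt (p' * q' * r'))
    (hγ : γ = p' / (u * Real.sqrt (p' * q' * r')))
    (Φ : ℝ → ℝ → ℝ)
    (hΦ : ∀ s t : ℝ, Φ s t = (p ^ (1 / p) * q ^ (1 / q) / r ^ (1 / r))
        * (s ^ (1 / p) * t ^ (1 / q)
          / ((s + t + β ^ 2) ^ (1 / r') * (γ ^ 2 * s + α ^ 2 * t + s * t) ^ (1 / r)))) :
    (∀ s t : ℝ, 0 < s → 0 < t →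
        Φ s t ≤ v ^ (1 / r - 1 / p) * u ^ (1 / r - 1 / q)) ∧
    (∀ s t : ℝ, 0 < s → 0 < t →
        (Φ s t = v ^ (1 / r - 1 / p) * u ^ (1 / r - 1 / q)
          ↔ s = 1 / (p * v) ∧ t = 1 / (q * u))) := by
  have huv' : u.HolderConjugate v := holderConjugate_iff.2 ⟨hu, by rwa [one_div, one_div] at huv⟩
  have hp₁ := (holderConjugate_iff_eq_conjExponent hp).2 hp'
  have hq₁ := (holderConjugate_iff_eq_conjExponent hq).2 hq'
  have hr₁ := (holderConjugate_iff_eq_conjExponent hr).2 hr'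
  have hsum := WeightedYoung.conj_div_add_conj_div_eq_conj huv' hp₁ hq₁ hr₁ hcond
  obtain ⟨hu₀, hv₀, -⟩ := huv'.all_pos
  have hp'₀ := hp₁.symm.pos
  have hq'₀ := hq₁.symm.pos
  have hr'₀ := hr₁.symm.pos
  have hprod : 0 ≤ p' * q' * r' := by positivity
  have hα2 : α ^ 2 = q' / (v ^ 2 * (p' * r')) := by
    rw [hα, div_pow, mul_pow, sq_sqrt hprod]; field_simp
  have hβ2 : β ^ 2 = r' / (p' * q') := by rw [hβ, div_pow, sq_sqrt hprod]; field_simp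
  have hγ2 : γ ^ 2 = p' / (u ^ 2 * (q' * r')) := by
    rw [hγ, div_pow, mul_pow, sq_sqrt hprod]; field_simp
  obtain rfl : Φ = WeightedYoung.phi p q r r' α β γ := funext₂ hΦ
  have key {s t : ℝ} (hs : 0 < s) (ht : 0 < t) :=
    WeightedYoung.phi_le_and_eq_iff huv' hp₁ hq₁ hr₁ hsum hα2 hβ2 hγ2 hs ht
  exact ⟨fun _ _ hs ht ↦ (key hs ht).1, fun _ _ hs ht ↦ (key hs ht).2⟩

theorem weighted_young_sup_constant
    (u v p q r : ℝ)
    (hu : 1 < u) (hv : 1 < v) (hp : 1 < p) (hq : 1 < q) (hr : 1 < r)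
    (huv : 1 / u + 1 / v = 1)
    (hcond : 1 / (u * (p - 1)) + 1 / (v * (q - 1)) = 1 / (r - 1))
    (p' q' r' : ℝ) (hp' : p' = p / (p - 1)) (hq' : q' = q / (q - 1)) (hr' : r' = r / (r - 1))
    (α β γ : ℝ)
    (hα : α = q' / (v * Real.sqrt (p' * q' * r')))
    (hβ : β = r' / Real.sqrt (p' * q' * r'))
    (hγ : γ = p' / (u * Real.sqrt (p' * q' * r')))
    (Φ : ℝ → ℝ → ℝ)
    (hΦ : ∀ s t : ℝ, Φ s t = (p ^ (1 / p) * q ^ (1 / q) / r ^ (1 / r))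
        * (s ^ (1 / p) * t ^ (1 / q)
          / ((s + t + β ^ 2) ^ (1 / r') * (γ ^ 2 * s + α ^ 2 * t + s * t) ^ (1 / r)))) :
    (∀ s t : ℝ, 0 < s → 0 < t →
        Φ s t ≤ v ^ (1 / r - 1 / p) * u ^ (1 / r - 1 / q)) ∧
    (∀ s t : ℝ, 0 < s → 0 < t →
        (Φ s t = v ^ (1 / r - 1 / p) * u ^ (1 / r - 1 / q)
          ↔ s = 1 / (p * v) ∧ t = 1 / (q * u))) :=
  weighted_young_sup_constant_general u v p q r hu hp hq hr huv hcond p' q' r' hp' hq' hr' α β γ hα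
    hβ hγ Φ hΦ
end
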